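/- arXiv:1503.07207 — 3 statements merged into one kernel-verified Lean document; each statement's English description precedes it below -/
import Mathlib

section
/- Let k ≥ 1 and let p, q be projections in M_k(ℂ), and set δ = tr_k(pq). Then there exists a projection q̃ ∈ M_k(ℂ) such that: (i) q̃p = 0; (ii) tr_k(q̃) = min(tr_k(q), 1 − tr_k(p)); (iii) ‖q − q̃‖₂ ≤ 6√δ. -/
/-!
Let `F` be the range of `(1 - p) q`; it lies in `ker p` and has dimension at most `rank q`, so
some subspace `W` with `F ≤ W ≤ ker p` has dimension `min (rank q) (k - rank p)`. The orthogonal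
projection `q̃` onto `W` is orthogonal to `p` and satisfies `q̃ q = (1 - p) q`, hence
`‖q - q̃‖₂² = tr q̃ - tr q + 2 tr (p q) ≤ 2 δ`: the bound even holds with `√2` in place of `6`.
-/

open Matrix

/-- Real part of the normalized trace; on the matrices considered here the trace is real. -/
noncomputable def ntr {k : ℕ} (a : Matrix (Fin k) (Fin k) ℂ) : ℝ :=
  a.trace.re / k

noncomputable def l2norm {k : ℕ} (a : Matrix (Fin k) (Fin k) ℂ) : ℝ :=
  Real.sqrt (ntr (aᴴ * a))

def IsProjection {k : ℕ} (p : Matrix (Fin k) (Fin k) ℂ) : Prop :=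
  p.IsHermitian ∧ p * p = p

open Module

theorem Submodule.exists_le_le_finrank_eq {K V : Type*} [DivisionRing K] [AddCommGroup V]
    [Module K V] [FiniteDimensional K V] {F G : Submodule K V} (hFG : F ≤ G) {r : ℕ}
    (hF : finrank K F ≤ r) (hG : r ≤ finrank K G) :
    ∃ W : Submodule K V, F ≤ W ∧ W ≤ G ∧ finrank K W = r := by
  induction r, hF using Nat.le_induction with
  | base => exact ⟨F, le_rfl, hFG, rfl⟩
  | succ r _ ih =>
    obtain ⟨W, hFW, hWG, rfl⟩ := ih (by omega)
    obtain ⟨v, hvG, hvW⟩ := SetLike.exists_of_lt (lt_of_le_of_finrank_lt_finrank hWG (by omega))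
    exact ⟨W ⊔ K ∙ v, hFW.trans le_sup_left, sup_le hWG (span_singleton_le_iff_mem _ _ |>.mpr hvG),
      finrank_sup_span_singleton hvW⟩

namespace ContinuousLinearMap

variable {𝕜 E : Type*} [RCLike 𝕜] [NormedAddCommGroup E] [InnerProductSpace 𝕜 E]
  [FiniteDimensional 𝕜 E] [CompleteSpace E]

theorem exists_isStarProjection_mul_eq_zero_mul_eq_one_sub_mul {P : E →L[𝕜] E}
    (hP : IsStarProjection P) (Q : E →L[𝕜] E) :
    ∃ R : E →L[𝕜] E, IsStarProjection R ∧ R * P = 0 ∧ R * Q = (1 - P) * Q ∧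
      finrank 𝕜 (R : E →ₗ[𝕜] E).range =
        min (finrank 𝕜 (Q : E →ₗ[𝕜] E).range) (finrank 𝕜 E - finrank 𝕜 (P : E →ₗ[𝕜] E).range) := by
  set F := (((1 - P) * Q : E →L[𝕜] E) : E →ₗ[𝕜] E).range
  have hFker : F ≤ (P : E →ₗ[𝕜] E).ker := by
    rintro _ ⟨x, rfl⟩
    change (P * ((1 - P) * Q)) x = 0
    rw [← mul_assoc, hP.mul_one_sub_self, zero_mul, _root_.zero_apply]
  have hFQ : finrank 𝕜 F ≤ finrank 𝕜 (Q : E →ₗ[𝕜] E).range := by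
    refine (Submodule.finrank_mono ?_).trans
      (Submodule.finrank_map_le ((1 - P : E →L[𝕜] E) : E →ₗ[𝕜] E) _)
    rintro _ ⟨x, rfl⟩
    exact ⟨Q x, ⟨x, rfl⟩, rfl⟩
  have hker : finrank 𝕜 (P : E →ₗ[𝕜] E).ker =
      finrank 𝕜 E - finrank 𝕜 (P : E →ₗ[𝕜] E).range := by
    have := LinearMap.finrank_range_add_finrank_ker (P : E →ₗ[𝕜] E)
    omega
  obtain ⟨W, hFW, hWker, hW⟩ := Submodule.exists_le_le_finrank_eq hFker
    (le_min hFQ (hker ▸ Submodule.finrank_mono hFker)) (hker ▸ min_le_right _ _)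
  have hPR : P * W.starProjection = 0 := by
    ext x
    exact hWker (W.starProjection_apply_mem x)
  have hRP : W.starProjection * P = 0 := by
    rw [← isSelfAdjoint_starProjection W |>.star_eq, ← hP.isSelfAdjoint.star_eq, ← star_mul, hPR,
      star_zero]
  refine ⟨W.starProjection, isStarProjection_starProjection, hRP, ?_, ?_⟩
  · have hRF : W.starProjection * ((1 - P) * Q) = (1 - P) * Q := by
      ext x
      exact Submodule.starProjection_eq_self_iff.mpr (hFW ⟨x, rfl⟩)
    calc W.starProjection * Q = W.starProjection * ((1 - P) * Q) + W.starProjection * P * Q := by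
          rw [mul_assoc, ← mul_add, sub_mul, one_mul, sub_add_cancel]
      _ = (1 - P) * Q := by rw [hRF, hRP, zero_mul, add_zero]
  · rw [Submodule.range_starProjection, hW]

end ContinuousLinearMap

namespace Matrix

variable {n : Type*} [Fintype n] [DecidableEq n]

theorem trace_eq_rank_of_isIdempotentElem {K : Type*} [Field K] {A : Matrix n n K}
    (hA : IsIdempotentElem A) : A.trace = A.rank := by
  rw [← trace_toLin'_eq,
    (LinearMap.IsIdempotentElem.isProj_range (toLin' A) (hA.map toLinAlgEquiv')).trace]
  rfl

variable {𝕜 : Type*} [RCLike 𝕜]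

theorem rank_eq_finrank_range_toEuclideanCLM (A : Matrix n n 𝕜) :
    A.rank = finrank 𝕜
      (toEuclideanCLM (𝕜 := 𝕜) A : EuclideanSpace 𝕜 n →ₗ[𝕜] EuclideanSpace 𝕜 n).range := by
  rw [coe_toEuclideanCLM_eq_toEuclideanLin, toEuclideanLin_eq_toLin_orthonormal,
    rank_eq_finrank_range_toLin A (EuclideanSpace.basisFun n 𝕜).toBasis
      (EuclideanSpace.basisFun n 𝕜).toBasis]

theorem exists_isStarProjection_mul_eq_zero_mul_eq_one_sub_mul {p : Matrix n n 𝕜}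
    (hp : IsStarProjection p) (q : Matrix n n 𝕜) :
    ∃ r : Matrix n n 𝕜, IsStarProjection r ∧ r * p = 0 ∧ r * q = (1 - p) * q ∧
      r.rank = min q.rank (Fintype.card n - p.rank) := by
  obtain ⟨R, hR, hRP, hRQ, hRrank⟩ :=
    ContinuousLinearMap.exists_isStarProjection_mul_eq_zero_mul_eq_one_sub_mul
      (hp.map (toEuclideanCLM (𝕜 := 𝕜))) (toEuclideanCLM (𝕜 := 𝕜) q)
  set e := toEuclideanCLM (n := n) (𝕜 := 𝕜)
  refine ⟨e.symm R, hR.map e.symm, ?_, ?_, ?_⟩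
  · rw [← e.symm_apply_apply p, ← map_mul, hRP, map_zero]
  · rw [← e.symm_apply_apply q, ← map_mul, hRQ, map_mul, map_sub, map_one, e.symm_apply_apply,
      e.symm_apply_apply]
  · rw [rank_eq_finrank_range_toEuclideanCLM, e.apply_symm_apply, hRrank, finrank_euclideanSpace,
      rank_eq_finrank_range_toEuclideanCLM, rank_eq_finrank_range_toEuclideanCLM]

theorem trace_conjTranspose_sub_mul_sub {R : Type*} [CommRing R] [StarRing R]
    {p q r : Matrix n n R} (hq : IsStarProjection q) (hr : IsStarProjection r)
    (hrq : r * q = (1 - p) * q) :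
    ((q - r)ᴴ * (q - r)).trace = r.trace - q.trace + 2 * (p * q).trace := by
  have hexp : (q - r)ᴴ * (q - r) = q + r - (q * r + r * q) := by
    rw [← star_eq_conjTranspose, star_sub, hq.isSelfAdjoint.star_eq, hr.isSelfAdjoint.star_eq,
      sub_mul, mul_sub, mul_sub, hq.isIdempotentElem.eq, hr.isIdempotentElem.eq]
    abel
  rw [hexp, trace_sub, trace_add, trace_add, trace_mul_comm q r, hrq, sub_mul, one_mul, trace_sub]
  ring

end Matrix

theorem isProjection_iff_isStarProjection {k : ℕ} {p : Matrix (Fin k) (Fin k) ℂ} :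
    IsProjection p ↔ IsStarProjection p :=
  ⟨fun ⟨hH, hI⟩ => ⟨hI, hH⟩, fun h => ⟨h.isSelfAdjoint, h.isIdempotentElem⟩⟩

theorem ntr_eq_rank_div {k : ℕ} {p : Matrix (Fin k) (Fin k) ℂ} (hp : IsIdempotentElem p) :
    ntr p = p.rank / k := by
  rw [ntr, trace_eq_rank_of_isIdempotentElem hp, Complex.natCast_re]

theorem natCast_min_sub_div {a b k : ℕ} (ha : a ≤ k) :
    ((min b (k - a) : ℕ) : ℝ) / k = min ((b : ℝ) / k) (1 - (a : ℝ) / k) := by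
  rcases k.eq_zero_or_pos with rfl | hk
  · simp
  · rw [Nat.cast_min, Nat.cast_sub ha, ← min_div_div_right (by positivity), sub_div,
      div_self (by positivity)]

theorem stmt_1_general (k : ℕ) (p q : Matrix (Fin k) (Fin k) ℂ)
    (hp : IsProjection p) (hq : IsProjection q) :
    ∃ qt : Matrix (Fin k) (Fin k) ℂ,
      IsProjection qt ∧
      qt * p = 0 ∧
      ntr qt = min (ntr q) (1 - ntr p) ∧
      l2norm (q - qt) ≤ 6 * Real.sqrt (ntr (p * q)) := by
  rw [isProjection_iff_isStarProjection] at hp hq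
  obtain ⟨qt, hqt, hqtp, hqtq, hrank⟩ :=
    exists_isStarProjection_mul_eq_zero_mul_eq_one_sub_mul hp q
  have htr : ntr qt = min (ntr q) (1 - ntr p) := by
    rw [ntr_eq_rank_div hqt.isIdempotentElem, ntr_eq_rank_div hq.isIdempotentElem,
      ntr_eq_rank_div hp.isIdempotentElem, hrank, Fintype.card_fin]
    exact natCast_min_sub_div (rank_le_width p)
  have hdist : ntr ((q - qt)ᴴ * (q - qt)) = ntr qt - ntr q + 2 * ntr (p * q) := by
    simp only [ntr, trace_conjTranspose_sub_mul_sub hq hqt hqtq, Complex.add_re, Complex.sub_re,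
      Complex.mul_re, Complex.re_ofNat, Complex.im_ofNat, zero_mul, sub_zero]
    ring
  refine ⟨qt, isProjection_iff_isStarProjection.mpr hqt, hqtp, htr, ?_⟩
  calc l2norm (q - qt) ≤ √(2 * ntr (p * q)) := by
        refine Real.sqrt_le_sqrt ?_
        rw [hdist, htr]
        linarith [min_le_left (ntr q) (1 - ntr p)]
    _ = √2 * √(ntr (p * q)) := Real.sqrt_mul zero_le_two _
    _ ≤ 6 * √(ntr (p * q)) := by
        gcongr
        rw [Real.sqrt_le_iff]
        norm_num

/-- Lemma 3.4(vi)-(ix) of Dykema–Paulsen, matrix algebra case: given projections `p, q` in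
`M_k(ℂ)` with `δ = tr_k(pq)`, there is a projection `q̃` with `q̃ ⊥ p`,
`tr_k(q̃) = min(tr_k(q), 1 - tr_k(p))`, and `‖q - q̃‖₂ ≤ 6√δ`. -/
theorem stmt_1 (k : ℕ) (hk : 1 ≤ k) (p q : Matrix (Fin k) (Fin k) ℂ)
    (hp : IsProjection p) (hq : IsProjection q) :
    ∃ qt : Matrix (Fin k) (Fin k) ℂ,
      IsProjection qt ∧
      qt * p = 0 ∧
      ntr qt = min (ntr q) (1 - ntr p) ∧
      l2norm (q - qt) ≤ 6 * Real.sqrt (ntr (p * q)) :=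
  stmt_1_general k p q hp hq
end

section
/- Let m ≥ 1, let w : Fin m → ℝ satisfy w_i ≥ 0 for all i and Σ_i w_i = 1, and let h : Fin m → ℝ be injective (so that, viewed as the element (h_1, …, h_m) of the abelian C*-algebra ℂ^m, h is a self-adjoint generator of ℂ^m, and τ(f) := Σ_i w_i f_i defines a tracial state on ℂ^m). Then for every δ > 0 there exist a positive integer N, a real ε > 0, and a positive integer K such that for every k ≥ K the following holds: if a ∈ M_k(ℂ) is a self-adjoint matrix satisfying |tr_k(a^p) − Σ_{i} w_i h_i^p| < ε for every integer p with 1 ≤ p ≤ N, then there exists a unital *-algebra homomorphism π : ℂ^m → M_k(ℂ) such that ‖π(h) − a‖₂ < δ. -/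
open Matrix

/-!
Diagonalize `a = U diag(μ) U*` and let `q = ∏_{v ∈ h(Fin m)} (X - v)²`. As `q` vanishes on the
values of `h`, `τ(q(h)) = 0`, so if the moments of `a` up to `deg q` are close to those of `τ`,
then `tr_k(q(a)) = (1/k) ∑_j q(μ_j)` is small. Since the roots of `q` are double,
`q(t) ≥ c · dist(t, h(Fin m))²`; hence moving each eigenvalue `μ_j` to a nearest value
`h(σ j)` costs little in `‖·‖₂`, and `f ↦ U diag(f ∘ σ) U*` is the required homomorphism.
-/

open Finset Polynomial

namespace Matrix

variable {ι n R : Type*} [Fintype n] [DecidableEq n] [CommSemiring R] [StarRing R]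

def diagonalCompStarAlgHom (σ : n → ι) : (ι → R) →⋆ₐ[R] Matrix n n R where
  toFun f := diagonal (f ∘ σ)
  map_one' := diagonal_one
  map_mul' _ _ := (diagonal_mul_diagonal _ _).symm
  map_zero' := diagonal_zero
  map_add' _ _ := (diagonal_add _ _).symm
  commutes' r := (algebraMap_eq_diagonal r).symm
  map_star' _ := (diagonal_conjTranspose _).symm

@[simp]
lemma diagonalCompStarAlgHom_apply (σ : n → ι) (f : ι → R) :
    diagonalCompStarAlgHom σ f = diagonal (f ∘ σ) := rfl

end Matrix

section NormalizedTrace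

variable {k : ℕ}

lemma ntr_conjStarAlgAut (U : unitary (Matrix (Fin k) (Fin k) ℂ))
    (x : Matrix (Fin k) (Fin k) ℂ) : ntr (Unitary.conjStarAlgAut ℂ _ U x) = ntr x := by
  rw [ntr, ntr, Unitary.conjStarAlgAut_apply, trace_mul_cycle, Unitary.coe_star_mul_self, one_mul]

lemma l2norm_conjStarAlgAut (U : unitary (Matrix (Fin k) (Fin k) ℂ))
    (x : Matrix (Fin k) (Fin k) ℂ) : l2norm (Unitary.conjStarAlgAut ℂ _ U x) = l2norm x := by
  rw [l2norm, l2norm, ← star_eq_conjTranspose, ← map_star, ← map_mul, ntr_conjStarAlgAut,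
    star_eq_conjTranspose]

lemma ntr_diagonal (v : Fin k → ℂ) : ntr (diagonal v) = ∑ j, (k : ℝ)⁻¹ * (v j).re := by
  rw [ntr, trace_diagonal, Complex.re_sum, div_eq_inv_mul, mul_sum]

lemma l2norm_diagonal_ofReal (r : Fin k → ℝ) :
    l2norm (diagonal fun j => (r j : ℂ)) = √(∑ j, (k : ℝ)⁻¹ * r j ^ 2) := by
  rw [l2norm, diagonal_conjTranspose, diagonal_mul_diagonal, ntr_diagonal]
  simp [sq]

lemma Matrix.IsHermitian.ntr_pow {a : Matrix (Fin k) (Fin k) ℂ} (ha : a.IsHermitian) (p : ℕ) :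
    ntr (a ^ p) = ∑ j, (k : ℝ)⁻¹ * ha.eigenvalues j ^ p := by
  conv_lhs => rw [ha.spectral_theorem]
  rw [← map_pow, ntr_conjStarAlgAut, diagonal_pow, ntr_diagonal]
  simp [← Complex.ofReal_pow]

lemma Matrix.IsHermitian.l2norm_apply_sub {ι : Type*} {a : Matrix (Fin k) (Fin k) ℂ}
    (ha : a.IsHermitian) (σ : Fin k → ι) (f : ι → ℝ) :
    l2norm (((Unitary.conjStarAlgAut ℂ _ ha.eigenvectorUnitary).toStarAlgHom.comp
      (diagonalCompStarAlgHom σ)) (fun i => (f i : ℂ)) - a)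
      = √(∑ j, (k : ℝ)⁻¹ * (f (σ j) - ha.eigenvalues j) ^ 2) := by
  have hspec := ha.spectral_theorem
  -- abstract the spectral data, so that rewriting `a` leaves `ha` untouched
  set U := ha.eigenvectorUnitary
  set μ := ha.eigenvalues
  rw [hspec]
  change l2norm (Unitary.conjStarAlgAut ℂ _ U (diagonal _) - _) = _
  rw [← map_sub, l2norm_conjStarAlgAut, diagonal_sub, ← l2norm_diagonal_ofReal]
  congr 2
  ext j
  simp

end NormalizedTrace

namespace Finset

lemma exists_pos_forall_le_abs_sub (S : Finset ℝ) :
    ∃ G > 0, ∀ u ∈ S, ∀ v ∈ S, u ≠ v → G ≤ |u - v| := by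
  obtain he | hne := S.offDiag.eq_empty_or_nonempty
  · refine ⟨1, one_pos, fun u hu v hv huv => ?_⟩
    simpa [he] using (mem_offDiag (x := (u, v))).2 ⟨hu, hv, huv⟩
  · refine ⟨S.offDiag.inf' hne fun p => |p.1 - p.2|, (lt_inf'_iff _).2 ?_,
      fun u hu v hv huv =>
        inf'_le (fun p => |p.1 - p.2|) ((mem_offDiag (x := (u, v))).2 ⟨hu, hv, huv⟩)⟩
    rintro ⟨u, v⟩ huv
    exact abs_pos.2 (sub_ne_zero.2 (mem_offDiag.1 huv).2.2)

lemma exists_pos_forall_exists_mul_sq_le_prod (S : Finset ℝ) (hS : S.Nonempty) :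
    ∃ c > 0, ∀ t : ℝ, ∃ v ∈ S, c * (t - v) ^ 2 ≤ ∏ u ∈ S, (t - u) ^ 2 := by
  obtain ⟨G, hG, hsep⟩ := S.exists_pos_forall_le_abs_sub
  refine ⟨((G / 2) ^ 2) ^ (#S - 1), by positivity, fun t => ?_⟩
  obtain ⟨v, hv, hnear⟩ := S.exists_min_image (fun u => |t - u|) hS
  refine ⟨v, hv, ?_⟩
  -- `v` is nearest to `t` and `G`-far from every other `u ∈ S`, so `u` is `G / 2`-far from `t`
  have hfar : ∀ u ∈ S.erase v, (G / 2) ^ 2 ≤ (t - u) ^ 2 := by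
    intro u hu
    obtain ⟨huv, hu⟩ := mem_erase.1 hu
    have hGuv := hsep u hu v hv huv
    have htri : |u - v| ≤ |t - u| + |t - v| := by
      rw [abs_sub_comm t u]; exact abs_sub_le u t v
    have hGt : G / 2 ≤ |t - u| := by linarith [hnear u hu]
    calc (G / 2) ^ 2 ≤ |t - u| ^ 2 := by gcongr
      _ = (t - u) ^ 2 := sq_abs _
  calc ((G / 2) ^ 2) ^ (#S - 1) * (t - v) ^ 2
      = (∏ _u ∈ S.erase v, (G / 2) ^ 2) * (t - v) ^ 2 := by
        rw [prod_const, card_erase_of_mem hv]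
    _ ≤ (∏ u ∈ S.erase v, (t - u) ^ 2) * (t - v) ^ 2 :=
        mul_le_mul_of_nonneg_right (prod_le_prod (fun _ _ => by positivity) hfar) (sq_nonneg _)
    _ = ∏ u ∈ S, (t - u) ^ 2 := prod_erase_mul _ _ hv

end Finset

lemma exists_polynomial_eval_eq_zero_and_mul_sq_le_eval {κ : Type*} [Fintype κ] [Nonempty κ]
    (h : κ → ℝ) :
    ∃ q : ℝ[X], ∃ c > 0,
      (∀ i, q.eval (h i) = 0) ∧ ∀ t, ∃ i, c * (t - h i) ^ 2 ≤ q.eval t := by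
  have hq_eval (t : ℝ) : (∏ v ∈ univ.image h, (X - C v) ^ 2).eval t
      = ∏ v ∈ univ.image h, (t - v) ^ 2 := by
    simp [eval_prod]
  obtain ⟨c, hc, hnear⟩ :=
    (univ.image h).exists_pos_forall_exists_mul_sq_le_prod (univ_nonempty.image h)
  refine ⟨∏ v ∈ univ.image h, (X - C v) ^ 2, c, hc, fun i => ?_, fun t => ?_⟩
  · rw [hq_eval]
    exact prod_eq_zero (mem_image_of_mem h (mem_univ i)) (by simp)
  · obtain ⟨_, hv, hle⟩ := hnear t
    obtain ⟨i, -, rfl⟩ := mem_image.1 hv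
    exact ⟨i, (hq_eval t).symm ▸ hle⟩

section Moments

variable {ι κ : Type*} [Fintype ι] [Fintype κ]

lemma sum_mul_eval_eq_sum_coeff_mul (q : ℝ[X]) (u x : ι → ℝ) :
    ∑ i, u i * q.eval (x i)
      = ∑ p ∈ range (q.natDegree + 1), q.coeff p * ∑ i, u i * x i ^ p := by
  simp_rw [eval_eq_sum_range, mul_sum]
  rw [sum_comm]
  refine sum_congr rfl fun p _ => sum_congr rfl fun i _ => by ring

lemma abs_sum_mul_eval_sub_le (q : ℝ[X]) (u x : ι → ℝ) (w y : κ → ℝ) {ε : ℝ}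
    (hmom : ∀ p ≤ q.natDegree, |∑ i, u i * x i ^ p - ∑ j, w j * y j ^ p| ≤ ε) :
    |∑ i, u i * q.eval (x i) - ∑ j, w j * q.eval (y j)|
      ≤ (∑ p ∈ range (q.natDegree + 1), |q.coeff p|) * ε := by
  rw [sum_mul_eval_eq_sum_coeff_mul, sum_mul_eval_eq_sum_coeff_mul, ← sum_sub_distrib, sum_mul]
  refine (abs_sum_le_sum_abs _ _).trans (sum_le_sum fun p hp => ?_)
  rw [← mul_sub, abs_mul]
  gcongr
  exact hmom p (Nat.lt_succ_iff.1 (mem_range.1 hp))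

lemma exists_mul_sum_mul_sq_le_of_moments {q : ℝ[X]} {c ε : ℝ} {w h : κ → ℝ}
    (hq_h : ∀ i, q.eval (h i) = 0) (hq : ∀ t, ∃ i, c * (t - h i) ^ 2 ≤ q.eval t)
    (u μ : ι → ℝ) (hu : ∀ j, 0 ≤ u j)
    (hmom : ∀ p ≤ q.natDegree, |∑ j, u j * μ j ^ p - ∑ i, w i * h i ^ p| ≤ ε) :
    ∃ σ : ι → κ, c * ∑ j, u j * (h (σ j) - μ j) ^ 2
      ≤ (∑ p ∈ range (q.natDegree + 1), |q.coeff p|) * ε := by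
  choose σ hσ using fun j => hq (μ j)
  refine ⟨σ, ?_⟩
  have hq_μ := abs_sum_mul_eval_sub_le q u μ w h hmom
  simp only [hq_h, mul_zero, sum_const_zero, sub_zero] at hq_μ
  calc c * ∑ j, u j * (h (σ j) - μ j) ^ 2
      ≤ ∑ j, u j * q.eval (μ j) := by
        rw [mul_sum]
        refine sum_le_sum fun j _ => ?_
        rw [mul_left_comm, sub_sq_comm]
        exact mul_le_mul_of_nonneg_left (hσ j) (hu j)
    _ ≤ _ := (le_abs_self _).trans hq_μ

end Moments

theorem stmt_4_general (m : ℕ) (hm : 1 ≤ m) (w : Fin m → ℝ)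
    (hw1 : ∑ i, w i = 1) (h : Fin m → ℝ) :
    ∀ δ : ℝ, 0 < δ →
      ∃ (N : ℕ) (ε : ℝ) (K : ℕ), 0 < N ∧ 0 < ε ∧ 0 < K ∧
        ∀ k : ℕ, K ≤ k →
          ∀ a : Matrix (Fin k) (Fin k) ℂ, a.IsHermitian →
            (∀ p : ℕ, 1 ≤ p → p ≤ N →
              |ntr (a ^ p) - ∑ i, w i * h i ^ p| < ε) →
            ∃ π : (Fin m → ℂ) →⋆ₐ[ℂ] Matrix (Fin k) (Fin k) ℂ,
              l2norm (π (fun i => (h i : ℂ)) - a) < δ := by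
  intro δ hδ
  have : Nonempty (Fin m) := ⟨⟨0, hm⟩⟩
  obtain ⟨q, c, hc, hq_h, hq⟩ := exists_polynomial_eval_eq_zero_and_mul_sq_le_eval h
  set B := ∑ p ∈ range (q.natDegree + 1), |q.coeff p|
  have hB : 0 ≤ B := sum_nonneg fun _ _ => abs_nonneg _
  refine ⟨q.natDegree + 1, c * δ ^ 2 / (B + 1), 1, Nat.succ_pos _, by positivity, one_pos,
    fun k hk a ha hmom => ?_⟩
  have hmoments : ∀ p ≤ q.natDegree, |∑ j, (k : ℝ)⁻¹ * ha.eigenvalues j ^ p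
      - ∑ i, w i * h i ^ p| ≤ c * δ ^ 2 / (B + 1) := by
    intro p hp
    rcases Nat.eq_zero_or_pos p with rfl | hp0
    · have hk0 : (k : ℝ) ≠ 0 := by positivity
      simp only [pow_zero, mul_one, sum_const, card_univ, Fintype.card_fin, nsmul_eq_mul,
        mul_inv_cancel₀ hk0, hw1, sub_self, abs_zero]
      positivity
    · rw [← ha.ntr_pow]
      exact (hmom p hp0 (by omega)).le
  obtain ⟨σ, hσ⟩ := exists_mul_sum_mul_sq_le_of_moments hq_h hq (fun _ => (k : ℝ)⁻¹)
    ha.eigenvalues (fun _ => by positivity) hmoments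
  refine ⟨_, (ha.l2norm_apply_sub σ h).trans_lt ((Real.sqrt_lt' hδ).2 ?_)⟩
  refine lt_of_mul_lt_mul_left (hσ.trans_lt ?_) hc.le
  rw [mul_div_left_comm]
  exact mul_lt_of_lt_one_right (by positivity) ((div_lt_one (by positivity)).2 (by linarith))

/-- Lemma 3.3 of Dykema–Paulsen in concrete form: let `h` be a self-adjoint generator of
`ℂ^m` (a real-valued function with pairwise distinct values) and let `τ(f) = Σ w_i f_i`
be a tracial state on `ℂ^m`.  For every `δ > 0` there are `N`, `ε > 0` and `K` such that
for all `k ≥ K`, every self-adjoint `(N,ε)`-microstate `a ∈ M_k(ℂ)` for `h` is within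
`δ` in `‖·‖₂` of `π(h)` for some unital *-homomorphism `π : ℂ^m → M_k(ℂ)`. -/
theorem stmt_4 (m : ℕ) (hm : 1 ≤ m) (w : Fin m → ℝ) (hw : ∀ i, 0 ≤ w i)
    (hw1 : ∑ i, w i = 1) (h : Fin m → ℝ) (hinj : Function.Injective h) :
    ∀ δ : ℝ, 0 < δ →
      ∃ (N : ℕ) (ε : ℝ) (K : ℕ), 0 < N ∧ 0 < ε ∧ 0 < K ∧
        ∀ k : ℕ, K ≤ k →
          ∀ a : Matrix (Fin k) (Fin k) ℂ, a.IsHermitian →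
            (∀ p : ℕ, 1 ≤ p → p ≤ N →
              |ntr (a ^ p) - ∑ i, w i * h i ^ p| < ε) →
            ∃ π : (Fin m → ℂ) →⋆ₐ[ℂ] Matrix (Fin k) (Fin k) ℂ,
              l2norm (π (fun i => (h i : ℂ)) - a) < δ :=
  stmt_4_general m hm w hw1 h
end

section
/- Let n, m ≥ 1, let H be a complex Hilbert space, let ψ ∈ H be a unit vector, and for x ∈ Fin n, a ∈ Fin m let E_{x,a} and F_{x,a} be projections (self-adjoint idempotent bounded operators) on H satisfying Σ_a E_{x,a} = 1 and Σ_a F_{x,a} = 1 for each x, and E_{x,a} F_{y,b} = F_{y,b} E_{x,a} for all x, y, a, b. Assume the resulting correlation is synchronous: ⟨E_{x,a} F_{x,b} ψ, ψ⟩ = 0 whenever a ≠ b. Then: (1) E_{x,a} ψ = F_{x,a} ψ for all x, a; (2) the vector state φ(T) := ⟨T ψ, ψ⟩ is tracial on the unital subalgebra B of bounded operators on H generated by {E_{x,a} : x ∈ Fin n, a ∈ Fin m}, i.e. φ(ST) = φ(TS) for all S, T ∈ B; and (3) ⟨E_{x,a} F_{y,b} ψ, ψ⟩ = φ(E_{x,a}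 E_{y,b}) for all x, y, a, b. -/
/-!
Summing the synchronicity condition `⟪E_{x,a} F_{x,b} ψ, ψ⟫ = 0` (`a ≠ b`) over `b`, resp. `a`,
gives `⟪E_{x,a} F_{x,a} ψ, ψ⟫ = ⟪E_{x,a} ψ, ψ⟫ = ⟪F_{x,a} ψ, ψ⟫`, and for two projections this
forces `‖E_{x,a} ψ - F_{x,a} ψ‖² = 0`. Since `F_{x,a}` commutes with the algebra generated by
the `E`'s, the vector state can then move a generator `E_{x,a}` from one side of any `T` in that
algebra to the other: `⟪T E_{x,a} ψ, ψ⟫ = ⟪F_{x,a} T ψ, ψ⟫ = ⟪T ψ, F_{x,a} ψ⟫ = ⟪E_{x,a} T ψ, ψ⟫`.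
Traciality on the whole algebra follows by induction on the adjoin.
-/

open scoped InnerProductSpace

theorem AddMonoidHom.map_mul_comm_of_mem_adjoin {R A M : Type*} [CommSemiring R] [Semiring A]
    [Algebra R A] [AddCommMonoid M] (φ : A →+ M) {s : Set A}
    (hs : ∀ g ∈ s, ∀ T ∈ Algebra.adjoin R s, φ (T * g) = φ (g * T))
    {S T : A} (hS : S ∈ Algebra.adjoin R s) (hT : T ∈ Algebra.adjoin R s) :
    φ (S * T) = φ (T * S) := by
  induction hS using Algebra.adjoin_induction generalizing T with
  | mem g hg => exact (hs g hg T hT).symm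
  | algebraMap r => rw [Algebra.commutes]
  | add S₁ S₂ _ _ ih₁ ih₂ => rw [add_mul, mul_add, map_add, map_add, ih₁ hT, ih₂ hT]
  | mul S₁ S₂ hS₁ hS₂ ih₁ ih₂ =>
    calc φ (S₁ * S₂ * T) = φ (S₂ * T * S₁) := by rw [mul_assoc, ih₁ (mul_mem hS₂ hT)]
      _ = φ (T * S₁ * S₂) := by rw [mul_assoc, ih₂ (mul_mem hT hS₁), mul_assoc]
      _ = φ (T * (S₁ * S₂)) := by rw [mul_assoc]

section InnerProductSpace

variable {𝕜 H : Type*} [RCLike 𝕜] [NormedAddCommGroup H] [InnerProductSpace 𝕜 H]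

theorem inner_apply_eq_of_sum_eq {ι : Type*} [Fintype ι] [DecidableEq ι]
    {X : ι → H →L[𝕜] H} {Y : H →L[𝕜] H} (hsum : ∑ i, X i = Y) (ψ : H) {a : ι}
    (hoff : ∀ i ≠ a, ⟪X i ψ, ψ⟫_𝕜 = 0) :
    ⟪X a ψ, ψ⟫_𝕜 = ⟪Y ψ, ψ⟫_𝕜 := by
  rw [← hsum, sum_apply, sum_inner,
    Finset.sum_eq_single a (fun i _ hi => hoff i hi) (by simp)]

variable [CompleteSpace H]

theorem IsStarProjection.inner_apply_apply_self {P : H →L[𝕜] H} (hP : IsStarProjection P)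
    (ψ : H) : ⟪P ψ, P ψ⟫_𝕜 = ⟪P ψ, ψ⟫_𝕜 :=
  calc ⟪P ψ, P ψ⟫_𝕜 = ⟪P (P ψ), ψ⟫_𝕜 := (hP.isSelfAdjoint.isSymmetric _ _).symm
    _ = ⟪P ψ, ψ⟫_𝕜 := by rw [← mul_apply_eq_comp, hP.isIdempotentElem.eq]

theorem IsStarProjection.apply_eq_of_inner_mul_apply_eq {P Q : H →L[𝕜] H}
    (hP : IsStarProjection P) (hQ : IsStarProjection Q) {ψ : H}
    (hPQ_P : ⟪(P * Q) ψ, ψ⟫_𝕜 = ⟪P ψ, ψ⟫_𝕜) (hPQ_Q : ⟪(P * Q) ψ, ψ⟫_𝕜 = ⟪Q ψ, ψ⟫_𝕜) :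
    P ψ = Q ψ := by
  have hPP := hP.inner_apply_apply_self ψ
  have hQQ : ⟪Q ψ, Q ψ⟫_𝕜 = ⟪P ψ, ψ⟫_𝕜 := by rw [hQ.inner_apply_apply_self, ← hPQ_Q, hPQ_P]
  have hQP : ⟪Q ψ, P ψ⟫_𝕜 = ⟪P ψ, ψ⟫_𝕜 := (hP.isSelfAdjoint.isSymmetric _ _).symm.trans hPQ_P
  -- `⟪P ψ, ψ⟫ = ⟪P ψ, P ψ⟫` is real, so the conjugate cross term has the same value
  have hPQ : ⟪P ψ, Q ψ⟫_𝕜 = ⟪P ψ, ψ⟫_𝕜 := by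
    rw [← inner_conj_symm, hQP, ← hPP, inner_conj_symm]
  rw [← sub_eq_zero, ← inner_self_eq_zero (𝕜 := 𝕜), inner_sub_sub_self, hPP, hQQ, hQP, hPQ]
  ring

theorem apply_eq_of_inner_mul_apply_eq_zero {ι : Type*} [Fintype ι] [DecidableEq ι]
    {E F : ι → H →L[𝕜] H} (hE : ∀ i, IsStarProjection (E i)) (hF : ∀ i, IsStarProjection (F i))
    (hEsum : ∑ i, E i = 1) (hFsum : ∑ i, F i = 1) {ψ : H}
    (hsync : ∀ i j, i ≠ j → ⟪(E i * F j) ψ, ψ⟫_𝕜 = 0) (i : ι) :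
    E i ψ = F i ψ :=
  (hE i).apply_eq_of_inner_mul_apply_eq (hF i)
    (inner_apply_eq_of_sum_eq (X := fun j => E i * F j)
      (by rw [← Finset.mul_sum, hFsum, mul_one]) ψ fun j hj => hsync i j hj.symm)
    (inner_apply_eq_of_sum_eq (X := fun j => E j * F i)
      (by rw [← Finset.sum_mul, hEsum, one_mul]) ψ fun j hj => hsync j i hj)

theorem inner_mul_apply_comm_of_apply_eq {P Q T : H →L[𝕜] H} (hP : IsSelfAdjoint P)
    (hQ : IsSelfAdjoint Q) {ψ : H} (hPQ : P ψ = Q ψ) (hQT : Commute Q T) :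
    ⟪(T * P) ψ, ψ⟫_𝕜 = ⟪(P * T) ψ, ψ⟫_𝕜 :=
  calc ⟪(T * P) ψ, ψ⟫_𝕜 = ⟪(Q * T) ψ, ψ⟫_𝕜 := by
        rw [hQT.eq, mul_apply_eq_comp, hPQ, mul_apply_eq_comp]
    _ = ⟪T ψ, P ψ⟫_𝕜 := by rw [mul_apply_eq_comp, hPQ]; exact hQ.isSymmetric _ _
    _ = ⟪(P * T) ψ, ψ⟫_𝕜 := (hP.isSymmetric _ _).symm

end InnerProductSpace

theorem stmt_7_general (n m : ℕ)
    (H : Type) [NormedAddCommGroup H] [InnerProductSpace ℂ H] [CompleteSpace H]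
    (ψ : H)
    (E F : Fin n → Fin m → (H →L[ℂ] H))
    (hE : ∀ x a, IsSelfAdjoint (E x a) ∧ E x a * E x a = E x a)
    (hF : ∀ y b, IsSelfAdjoint (F y b) ∧ F y b * F y b = F y b)
    (hEsum : ∀ x, ∑ a, E x a = 1)
    (hFsum : ∀ y, ∑ b, F y b = 1)
    (hcomm : ∀ x y a b, E x a * F y b = F y b * E x a)
    (hsync : ∀ x a b, a ≠ b → (inner ℂ ((E x a * F x b) ψ) ψ : ℂ) = 0) :
    (∀ x a, E x a ψ = F x a ψ) ∧
    (∀ S T : H →L[ℂ] H,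
        S ∈ Algebra.adjoin ℂ (Set.range fun p : Fin n × Fin m => E p.1 p.2) →
        T ∈ Algebra.adjoin ℂ (Set.range fun p : Fin n × Fin m => E p.1 p.2) →
        (inner ℂ ((S * T) ψ) ψ : ℂ) = (inner ℂ ((T * S) ψ) ψ : ℂ)) ∧
    (∀ x y a b,
        (inner ℂ ((E x a * F y b) ψ) ψ : ℂ) = (inner ℂ ((E x a * E y b) ψ) ψ : ℂ)) := by
  have hEF : ∀ x a, E x a ψ = F x a ψ := fun x =>
    apply_eq_of_inner_mul_apply_eq_zero (fun a => ⟨(hE x a).2, (hE x a).1⟩)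
      (fun b => ⟨(hF x b).2, (hF x b).1⟩) (hEsum x) (hFsum x) (hsync x)
  have hFcomm : ∀ y b, ∀ T ∈ Algebra.adjoin ℂ (Set.range fun p : Fin n × Fin m => E p.1 p.2),
      Commute (F y b) T := fun y b T hT =>
    Algebra.commute_of_mem_adjoin_of_forall_mem_commute hT <| by
      rintro _ ⟨⟨x, a⟩, rfl⟩
      exact (hcomm x y a b).symm
  let φ : (H →L[ℂ] H) →+ ℂ :=
    AddMonoidHom.mk' (fun T => ⟪T ψ, ψ⟫_ℂ) fun S T => by
      rw [add_apply, inner_add_left]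
  refine ⟨hEF, fun S T hS hT => φ.map_mul_comm_of_mem_adjoin ?_ hS hT, fun x y a b => ?_⟩
  · rintro _ ⟨⟨x, a⟩, rfl⟩ T hT
    exact inner_mul_apply_comm_of_apply_eq (hE x a).1 (hF x a).1 (hEF x a) (hFcomm x a T hT)
  · rw [mul_apply_eq_comp, mul_apply_eq_comp, hEF y b]

/-- The other direction of Theorem 2.1 of Dykema–Paulsen (Theorem 5.4 of [PSSTW]): for a
synchronous commuting quantum strategy `(E, F, ψ)`: (1) `E_{x,a} ψ = F_{x,a} ψ`; (2) the
vector state `φ(T) = ⟨Tψ, ψ⟩` is tracial on the unital algebra generated by the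
`E_{x,a}`; (3) the correlation is given by `⟨E_{x,a} F_{y,b} ψ, ψ⟩ = φ(E_{x,a} E_{y,b})`. -/
theorem stmt_7 (n m : ℕ) (hn : 1 ≤ n) (hm : 1 ≤ m)
    (H : Type) [NormedAddCommGroup H] [InnerProductSpace ℂ H] [CompleteSpace H]
    (ψ : H) (hψ : ‖ψ‖ = 1)
    (E F : Fin n → Fin m → (H →L[ℂ] H))
    (hE : ∀ x a, IsSelfAdjoint (E x a) ∧ E x a * E x a = E x a)
    (hF : ∀ y b, IsSelfAdjoint (F y b) ∧ F y b * F y b = F y b)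
    (hEsum : ∀ x, ∑ a, E x a = 1)
    (hFsum : ∀ y, ∑ b, F y b = 1)
    (hcomm : ∀ x y a b, E x a * F y b = F y b * E x a)
    (hsync : ∀ x a b, a ≠ b → (inner ℂ ((E x a * F x b) ψ) ψ : ℂ) = 0) :
    (∀ x a, E x a ψ = F x a ψ) ∧
    (∀ S T : H →L[ℂ] H,
        S ∈ Algebra.adjoin ℂ (Set.range fun p : Fin n × Fin m => E p.1 p.2) →
        T ∈ Algebra.adjoin ℂ (Set.range fun p : Fin n × Fin m => E p.1 p.2) →
        (inner ℂ ((S * T) ψ) ψ : ℂ) = (inner ℂ ((T * S) ψ) ψ : ℂ)) ∧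
    (∀ x y a b,
        (inner ℂ ((E x a * F y b) ψ) ψ : ℂ) = (inner ℂ ((E x a * E y b) ψ) ψ : ℂ)) :=
  stmt_7_general n m H ψ E F hE hF hEsum hFsum hcomm hsync
end
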